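/- arXiv:1505.06455 — 2 statements merged into one kernel-verified Lean document; each statement's English description precedes it below -/
import Mathlib

section
/- Let Z ⊆ ℚ be the localization ℤ_(p) = { r/s ∈ ℚ : p does not divide s }. Then the set of p-divisible elements p·ℤ_(p) is dense and codense in ℤ_(p) with respect to the order topology: every nonempty open interval of ℤ_(p) contains both a p-divisible element and a non-p-divisible element. Consequently, the infinite definable set p·ℤ_(p) has empty interior in ℤ_(p). -/
/-!
Take a denominator `t` prime to `p` with `(p + 1) / (b - a) < t`. The interval `(a t, b t)` is then
longer than `p + 1`, so it contains two consecutive integers `m p` and `m p + 1`. Both `m p / t` and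
`(m p + 1) / t` lie in `ℤ_(p) ∩ (a, b)`; the first is `p · (m / t)`, and the second is not
`p`-divisible, because `p ∤ m p + 1`.
-/

lemma Rat.not_dvd_den_intCast_div {p t : ℕ} (ht : ¬ p ∣ t) (z : ℤ) :
    ¬ p ∣ ((z : ℚ) / t).den := by
  have hden : (((z : ℚ) / t).den : ℤ) ∣ t := by
    have hdiv : (z : ℚ) / t = Rat.divInt z t := by rw [Rat.divInt_eq_div]; push_cast; rfl
    rw [hdiv]
    exact Rat.den_dvd z t
  exact fun h => ht (Int.natCast_dvd_natCast.mp ((Int.natCast_dvd_natCast.mpr h).trans hden))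

lemma Int.dvd_of_intCast_div_eq_natCast_mul {p t : ℕ} (hp : p.Prime) (ht : t ≠ 0) {z : ℤ}
    {r : ℚ} (hr : ¬ p ∣ r.den) (h : (z : ℚ) / t = p * r) : (p : ℤ) ∣ z := by
  have hZ : z * r.den = p * r.num * t := by
    have hQ : (z : ℚ) * r.den = p * r.num * t := by
      rw [← Rat.mul_den_eq_num, div_eq_iff (by exact_mod_cast ht)] at *
      rw [h]; ring
    exact_mod_cast hQ
  have hdvd : (p : ℤ) ∣ z * r.den := ⟨r.num * t, by rw [hZ]; ring⟩
  exact ((Nat.prime_iff_prime_int.mp hp).dvd_mul.mp hdvd).resolve_right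
    (fun h => hr (Int.natCast_dvd_natCast.mp h))

lemma exists_nat_not_dvd_gt {K : Type*} [Field K] [LinearOrder K] [IsStrictOrderedRing K]
    [Archimedean K] {p : ℕ} (hp : 1 < p) (x : K) : ∃ t : ℕ, ¬ p ∣ t ∧ x < t := by
  obtain ⟨n, hn⟩ := exists_nat_gt x
  refine ⟨n * p + 1, ?_, hn.trans_le ?_⟩
  · rw [Nat.dvd_add_right (dvd_mul_left p n)]
    exact Nat.not_dvd_of_pos_of_lt one_pos hp
  · exact_mod_cast (Nat.le_mul_of_pos_right n (by omega)).trans (Nat.le_succ _)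

lemma exists_int_mul_between {K : Type*} [Field K] [LinearOrder K] [IsStrictOrderedRing K]
    [FloorRing K] {c u v : K} (hc : 0 < c) (h : u + c + 1 < v) :
    ∃ m : ℤ, u < m * c ∧ m * c + 1 < v := by
  refine ⟨⌊u / c⌋ + 1, ?_, ?_⟩
  · rw [← div_lt_iff₀ hc]; push_cast
    exact Int.lt_floor_add_one _
  · have : ((⌊u / c⌋ : ℤ) : K) * c ≤ u := (le_div_iff₀ hc).mp (Int.floor_le _)
    push_cast; linarith

/-- In `ℤ_(p) = {q : ℚ | p ∤ q.den}`, the set of `p`-divisible elements is dense and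
codense: every nonempty open interval of `ℤ_(p)` contains both a `p`-divisible element
of `ℤ_(p)` and an element of `ℤ_(p)` that is not `p`-divisible in `ℤ_(p)`. -/
theorem stmt_8 (p : ℕ) (hp : p.Prime) :
    ∀ a b : ℚ, a < b →
      (∃ q : ℚ, ¬ p ∣ q.den ∧ a < q ∧ q < b ∧
        ∃ r : ℚ, ¬ p ∣ r.den ∧ q = (p : ℚ) * r) ∧
      (∃ q : ℚ, ¬ p ∣ q.den ∧ a < q ∧ q < b ∧
        ¬ ∃ r : ℚ, ¬ p ∣ r.den ∧ q = (p : ℚ) * r) := by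
  intro a b hab
  obtain ⟨t, htp, hgap⟩ := exists_nat_not_dvd_gt hp.one_lt ((p + 1) / (b - a) : ℚ)
  have ht : (0 : ℚ) < t := lt_of_le_of_lt (by positivity) hgap
  obtain ⟨m, hlo, hhi⟩ := exists_int_mul_between (u := a * t) (v := b * t)
    (by exact_mod_cast hp.pos : (0 : ℚ) < p)
    (by rw [div_lt_iff₀ (sub_pos.mpr hab)] at hgap; linarith)
  have hq₁ : a < ((m * p : ℤ) : ℚ) / t := by rw [lt_div_iff₀ ht]; push_cast; exact hlo
  have hq₂ : ((m * p + 1 : ℤ) : ℚ) / t < b := by rw [div_lt_iff₀ ht]; push_cast; exact hhi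
  have hq₁₂ : ((m * p : ℤ) : ℚ) / t < ((m * p + 1 : ℤ) : ℚ) / t := by
    gcongr; exact_mod_cast lt_add_one _
  refine ⟨⟨_, Rat.not_dvd_den_intCast_div htp _, hq₁, hq₁₂.trans hq₂, (m : ℚ) / t,
      Rat.not_dvd_den_intCast_div htp m, by push_cast; ring⟩,
    ⟨_, Rat.not_dvd_den_intCast_div htp _, hq₁.trans hq₁₂, hq₂, ?_⟩⟩
  rintro ⟨r, hr, h⟩
  have hdvd := Int.dvd_of_intCast_div_eq_natCast_mul hp (by rintro rfl; simp at ht) hr h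
  rw [Int.dvd_add_right (dvd_mul_left _ m)] at hdvd
  exact hp.not_dvd_one (by exact_mod_cast hdvd)
end

section
/- Let (M, <, P) be a linear order with a unary predicate, let I be a linear order without endpoints, and let (a_i)_{i ∈ I} be a sequence in M that is order-indiscernible for the language {<, P} over ∅ (i.e., for any two increasing tuples of indices of the same length, the corresponding tuples of elements satisfy the same quantifier-free {<,P}-formulas). Let c ∈ M with a_i < c for all i ∈ I. Then for any i < j in I and any finite sequence of subsets S_1, ..., S_k each equal to P or its complement: if there exist e_1 < ... < e_k with a_i < e_1, e_k < c, and e_l ∈ S_l for each l, then there exist e'_1 < ... < e'_k with a_j < e'_1, e'_k < c, and e'_l ∈ S_l for each l. -/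
/-!
Pick `ℓ > j`. The elements of the chain below `a ℓ` form an initial segment lying between
`a i` and `a ℓ`; by indiscernibility the same signs are realized between `a j` and `a ℓ`.
Replacing that initial segment by the new realization and keeping the rest of the chain,
which lies in `[a ℓ, c)`, gives a chain above `a j`.
-/

section

variable {M : Type*} [LinearOrder M]

def RealizesBetween (P : Set M) {k : ℕ} (ε : Fin k → Bool) (x y : M) : Prop :=
  ∃ e : Fin k → M, StrictMono e ∧ (∀ l, x < e l ∧ e l < y) ∧ ∀ l, e l ∈ P ↔ ε l = true

theorem StrictMono.exists_lt_iff_val_lt {k : ℕ} {e : Fin k → M} (he : StrictMono e) (x : M) :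
    ∃ m ≤ k, ∀ l, e l < x ↔ (l : ℕ) < m := by
  classical
  have hex : ∃ n : ℕ, ∀ l : Fin k, n ≤ l → x ≤ e l := ⟨k, fun l hl => absurd l.2 (by omega)⟩
  refine ⟨Nat.find hex, Nat.find_min' hex fun l hl => absurd l.2 (by omega), fun l => ?_⟩
  constructor
  · intro hl
    by_contra hm
    exact (Nat.find_spec hex l (not_lt.mp hm)).not_gt hl
  · intro hl
    have hmin := Nat.find_min hex hl
    simp only [not_forall, not_le] at hmin
    obtain ⟨l', hll', hl'⟩ := hmin
    exact (he.monotone (Fin.le_def.mpr hll')).trans_lt hl'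

theorem strictMono_dite_lt {m k : ℕ} {f : Fin m → M} {e : Fin k → M}
    (hf : StrictMono f) (he : StrictMono e)
    (hfe : ∀ (l : Fin m) (l' : Fin k), m ≤ l' → f l < e l') :
    StrictMono fun l : Fin k => if h : (l : ℕ) < m then f ⟨l, h⟩ else e l := by
  intro l₁ l₂ hlt
  have hlt' : (l₁ : ℕ) < l₂ := hlt
  by_cases h₁ : (l₁ : ℕ) < m <;> by_cases h₂ : (l₂ : ℕ) < m
  · simpa only [dif_pos h₁, dif_pos h₂] using hf (Fin.mk_lt_mk.mpr hlt')
  · simpa only [dif_pos h₁, dif_neg h₂] using hfe _ _ (not_lt.mp h₂)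
  · omega
  · simpa only [dif_neg h₁, dif_neg h₂] using he hlt

theorem RealizesBetween.of_prefixes {P : Set M} {k : ℕ} {ε : Fin k → Bool} {x x' w y : M}
    (h : RealizesBetween P ε x y) (hx' : x' < w) (hw : w < y)
    (hpre : ∀ m (hm : m ≤ k), RealizesBetween P (ε ∘ Fin.castLE hm) x w →
      RealizesBetween P (ε ∘ Fin.castLE hm) x' w) :
    RealizesBetween P ε x' y := by
  obtain ⟨e, he, hbd, hsign⟩ := h
  obtain ⟨m, hm, hsplit⟩ := he.exists_lt_iff_val_lt w
  have hupper : ∀ l : Fin k, m ≤ (l : ℕ) → w ≤ e l := fun l hl => not_lt.mp fun h => by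
    have := (hsplit l).mp h; omega
  obtain ⟨f, hf, hfbd, hfsign⟩ := hpre m hm
    ⟨e ∘ Fin.castLE hm, he.comp (Fin.strictMono_castLE hm),
      fun l => ⟨(hbd _).1, (hsplit _).mpr l.2⟩, fun l => hsign _⟩
  refine ⟨_, strictMono_dite_lt hf he fun l l' hl' => (hfbd l).2.trans_le (hupper l' hl'),
    fun l => ?_, fun l => ?_⟩
  · by_cases hl : (l : ℕ) < m
    · simpa only [dif_pos hl] using ⟨(hfbd _).1, (hfbd _).2.trans hw⟩
    · simpa only [dif_neg hl] using ⟨hx'.trans_le (hupper l (not_lt.mp hl)), (hbd l).2⟩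
  · by_cases hl : (l : ℕ) < m
    · rw [dif_pos hl]
      exact hfsign ⟨l, hl⟩
    · simpa only [dif_neg hl] using hsign l

end

/-- Let `(M, <, P)` be a linear order with a unary predicate, `I` a linear order with no
greatest element, and `(a_i)` an increasing `{<,P}`-indiscernible sequence (expressed via
the sign-sequence realization condition) with `a_i < c` for all `i`.  Then any finite
sign sequence over `{P, Pᶜ}` realized by an increasing chain strictly between `a_i` and `c`
(for `i < j`) is also realized strictly between `a_j` and `c`. -/
theorem stmt_13 {M I : Type*} [LinearOrder M] [LinearOrder I] [NoMaxOrder I]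
    (P : Set M) (a : I → M) (c : M)
    (hmono : StrictMono a)
    (hc : ∀ i : I, a i < c)
    -- indiscernibility: realization of a sign sequence between `a i` and `a j`
    -- depends only on having `i < j`
    (hind : ∀ (i j i' j' : I), i < j → i' < j' →
      ∀ (k : ℕ) (ε : Fin k → Bool),
        ((∃ e : Fin k → M, StrictMono e ∧ (∀ l, a i < e l ∧ e l < a j) ∧
            ∀ l, e l ∈ P ↔ ε l = true) ↔
          (∃ e : Fin k → M, StrictMono e ∧ (∀ l, a i' < e l ∧ e l < a j') ∧
            ∀ l, e l ∈ P ↔ ε l = true))) :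
    ∀ i j : I, i < j → ∀ (k : ℕ) (ε : Fin k → Bool),
      (∃ e : Fin k → M, StrictMono e ∧ (∀ l, a i < e l ∧ e l < c) ∧
        ∀ l, e l ∈ P ↔ ε l = true) →
      (∃ e : Fin k → M, StrictMono e ∧ (∀ l, a j < e l ∧ e l < c) ∧
        ∀ l, e l ∈ P ↔ ε l = true) := by
  intro i j hij k ε h
  obtain ⟨ℓ, hjℓ⟩ := exists_gt j
  exact RealizesBetween.of_prefixes (w := a ℓ) h (hmono hjℓ) (hc ℓ) fun m _ =>
    (hind i ℓ j ℓ (hij.trans hjℓ) hjℓ m _).mp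
end
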